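/- MTE representation of welfare: under the stated assumptions, W(G) = E[Y₀] + E[1{Z ∈ G} ∫₀¹ MTE(u, X) du] for every decision set G, where MTE(u,x) = E[Y₁ − Y₀ | U = u, X = x]. -/

import Mathlib

/-! On `A = {Z ∈ G}`, which lies in `σ(Z) ⊆ σ(Z, U)`, the welfare gain `∫_A (Y₁ - Y₀)` equals
`∫_A E[Y₁ - Y₀ | Z, U]`, hence `∫_A MTE(U, X)` by the exclusion restriction. Tested on
indicators, conditional uniformity of `U` given `Z` says that under `μ` restricted to `A` the law
of `(U, X)` is Lebesgue measure on `(0, 1]` times the law of `X`, and Fubini turns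
`∫_A MTE(U, X)` into `∫_A ∫₀¹ MTE(u, X) du`. -/

open MeasureTheory

section

variable {Ω α β E : Type*} {m mΩ : MeasurableSpace Ω} [MeasurableSpace α] [MeasurableSpace β]
  [NormedAddCommGroup E] [NormedSpace ℝ E] {μ : Measure Ω}

lemma integral_ite_eq_add_setIntegral_sub {A : Set Ω} [DecidablePred (· ∈ A)]
    (hA : MeasurableSet A) {f g : Ω → E} (hf : Integrable f μ) (hg : Integrable g μ) :
    ∫ ω, (if ω ∈ A then f ω else g ω) ∂μ = ∫ ω, g ω ∂μ + ∫ ω in A, (f ω - g ω) ∂μ := by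
  have hsplit : (fun ω => if ω ∈ A then f ω else g ω) = fun ω => g ω + A.indicator (f - g) ω := by
    ext ω
    by_cases hω : ω ∈ A <;> simp [hω]
  rw [hsplit, integral_add hg ((hf.sub hg).indicator hA), integral_indicator hA]
  rfl

lemma setIntegral_eq_of_condExp_ae_eq [CompleteSpace E] (hm : m ≤ mΩ)
    [SigmaFinite (μ.trim hm)] {Y f : Ω → E} (hY : Integrable Y μ) (hf : μ[Y | m] =ᵐ[μ] f)
    {A : Set Ω} (hA : MeasurableSet[m] A) :
    ∫ ω in A, Y ω ∂μ = ∫ ω in A, f ω ∂μ := by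
  rw [← setIntegral_condExp hm hY hA]
  exact integral_congr_ae (ae_restrict_of_ae hf)

lemma condExp_sub_ae_eq_of_ae_eq [CompleteSpace E] {m₁ m₂ : MeasurableSpace Ω} {Y₀ Y₁ : Ω → E}
    (hY₀ : Integrable Y₀ μ) (hY₁ : Integrable Y₁ μ)
    (h₀ : μ[Y₀ | m₁] =ᵐ[μ] μ[Y₀ | m₂]) (h₁ : μ[Y₁ | m₁] =ᵐ[μ] μ[Y₁ | m₂]) :
    μ[Y₁ - Y₀ | m₁] =ᵐ[μ] μ[Y₁ - Y₀ | m₂] :=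
  calc μ[Y₁ - Y₀ | m₁] =ᵐ[μ] μ[Y₁ | m₁] - μ[Y₀ | m₁] := condExp_sub hY₁ hY₀ m₁
    _ =ᵐ[μ] μ[Y₁ | m₂] - μ[Y₀ | m₂] := h₁.sub h₀
    _ =ᵐ[μ] μ[Y₁ - Y₀ | m₂] := (condExp_sub hY₁ hY₀ m₂).symm

lemma integral_prod_map_eq_integral_integral {ν : Measure α} [SFinite ν] {ρ : Measure Ω}
    [SFinite ρ] {X : Ω → β} (hX : Measurable X) {f : α × β → E} (hf : StronglyMeasurable f)
    (hfi : Integrable f (ν.prod (ρ.map X))) :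
    ∫ p, f p ∂ν.prod (ρ.map X) = ∫ ω, ∫ v, f (v, X ω) ∂ν ∂ρ := by
  rw [integral_prod_symm f hfi, integral_map hX.aemeasurable
    hf.integral_prod_left'.aestronglyMeasurable]

variable {V : Ω → α} {X : Ω → β} {ν : Measure α} {A : Set Ω}

lemma map_restrict_eq_prod_of_condExp [IsFiniteMeasure μ] [IsFiniteMeasure ν]
    (hm : m ≤ mΩ) (hV : Measurable V) (hX : Measurable X)
    (hcond : ∀ g : α × β → ℝ, Measurable g → (∃ C : ℝ, ∀ p, |g p| ≤ C) →
      μ[fun ω => g (V ω, X ω) | m] =ᵐ[μ] fun ω => ∫ v, g (v, X ω) ∂ν)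
    (hA : MeasurableSet[m] A) :
    (μ.restrict A).map (fun ω => (V ω, X ω)) = ν.prod ((μ.restrict A).map X) := by
  have hVX : Measurable fun ω => (V ω, X ω) := hV.prodMk hX
  ext S hS
  rw [← measureReal_eq_measureReal_iff, ← integral_indicator_one hS,
    ← integral_indicator_one hS, integral_map hVX.aemeasurable
      (stronglyMeasurable_one.indicator hS).aestronglyMeasurable,
    integral_prod_map_eq_integral_integral hX (stronglyMeasurable_one.indicator hS)
      ((integrable_const 1).indicator hS)]
  refine setIntegral_eq_of_condExp_ae_eq hm
    (((integrable_const 1).indicator hS).comp_measurable hVX) ?_ hA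
  refine hcond _ (measurable_one.indicator hS) ⟨1, fun p => ?_⟩
  by_cases hp : p ∈ S <;> simp [hp]

lemma setIntegral_comp_eq_setIntegral_integral [SFinite ν] [SFinite μ]
    (hV : Measurable V) (hX : Measurable X)
    (hlaw : (μ.restrict A).map (fun ω => (V ω, X ω)) = ν.prod ((μ.restrict A).map X))
    {f : α × β → E} (hf : StronglyMeasurable f)
    (hfi : IntegrableOn (fun ω => f (V ω, X ω)) A μ) :
    ∫ ω in A, f (V ω, X ω) ∂μ = ∫ ω in A, ∫ v, f (v, X ω) ∂ν ∂μ := by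
  have hVX : Measurable fun ω => (V ω, X ω) := hV.prodMk hX
  have hfi' : Integrable f (ν.prod ((μ.restrict A).map X)) := by
    rw [← hlaw, integrable_map_measure hf.aestronglyMeasurable hVX.aemeasurable]
    exact hfi
  rw [← integral_prod_map_eq_integral_integral hX hf hfi', ← hlaw,
    integral_map hVX.aemeasurable hf.aestronglyMeasurable]

end

open Classical in
/-- MTE representation of welfare: under (i) `U | Z ~ Uniform[0,1]` (encoded via conditional
expectations of bounded measurable functions of `(U, X)` given `Z`), and (ii) the exclusion
restriction `E[Y_d | Z, U] = E[Y_d | X, U]`, one has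
`W(G) = E[Y₀] + E[1{Z ∈ G} ∫₀¹ MTE(u, X) du]` for every measurable decision set `G`. -/
theorem MTE_representation_of_welfare {Ω γ δ : Type*} [MeasurableSpace Ω] [MeasurableSpace γ]
    [MeasurableSpace δ] (μ : Measure Ω) [IsProbabilityMeasure μ]
    (Z : Ω → γ × δ) (U : Ω → ℝ) (Y₀ Y₁ : Ω → ℝ)
    (hZ : Measurable Z) (hU : Measurable U)
    (hY₀ : MemLp Y₀ 2 μ) (hY₁ : MemLp Y₁ 2 μ)
    (X : Ω → δ) (hX : ∀ ω, X ω = (Z ω).2)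
    -- (i) U is uniformly distributed on [0,1] conditionally on Z:
    (hunif : ∀ g : ℝ × δ → ℝ, Measurable g → (∃ C : ℝ, ∀ p, |g p| ≤ C) →
      μ[fun ω => g (U ω, X ω) | MeasurableSpace.comap Z inferInstance]
        =ᵐ[μ] fun ω => ∫ u in (0:ℝ)..1, g (u, X ω))
    -- (ii) exclusion restriction:
    (hexcl : ∀ Y ∈ ({Y₀, Y₁} : Set (Ω → ℝ)),
      μ[Y | MeasurableSpace.comap (fun ω => (Z ω, U ω)) inferInstance]
        =ᵐ[μ] μ[Y | MeasurableSpace.comap (fun ω => (X ω, U ω)) inferInstance])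
    -- MTE(u,x) is a version of E[Y₁ - Y₀ | U = u, X = x]:
    (MTE : ℝ → δ → ℝ) (hMTEmeas : Measurable (fun p : ℝ × δ => MTE p.1 p.2))
    (hMTEver : μ[fun ω => Y₁ ω - Y₀ ω |
        MeasurableSpace.comap (fun ω => (U ω, X ω)) inferInstance]
      =ᵐ[μ] fun ω => MTE (U ω) (X ω)) :
    ∀ G : Set (γ × δ), MeasurableSet G →
      (∫ ω, (if Z ω ∈ G then Y₁ ω else Y₀ ω) ∂μ)
        = (∫ ω, Y₀ ω ∂μ)
          + ∫ ω, (if Z ω ∈ G then ∫ u in (0:ℝ)..1, MTE u (X ω) else 0) ∂μ := by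
  intro G hG
  have hXm : Measurable X := (funext hX : X = _) ▸ measurable_snd.comp hZ
  have hY₀i : Integrable Y₀ μ := hY₀.integrable one_le_two
  have hY₁i : Integrable Y₁ μ := hY₁.integrable one_le_two
  have hA : MeasurableSet[MeasurableSpace.comap Z inferInstance] (Z ⁻¹' G) := ⟨G, hG, rfl⟩
  have hA' : MeasurableSet[MeasurableSpace.comap (fun ω => (Z ω, U ω)) inferInstance]
      (Z ⁻¹' G) := ⟨G ×ˢ Set.univ, hG.prod .univ, by ext; simp⟩
  have hswap : MeasurableSpace.comap (fun ω => (X ω, U ω)) inferInstance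
      = MeasurableSpace.comap (fun ω => (U ω, X ω)) inferInstance :=
    (MeasurableSpace.comap_prodMk X U).trans
      ((sup_comm _ _).trans (MeasurableSpace.comap_prodMk U X).symm)
  have hMTE : μ[Y₁ - Y₀ | MeasurableSpace.comap (fun ω => (Z ω, U ω)) inferInstance]
      =ᵐ[μ] fun ω => MTE (U ω) (X ω) := by
    refine (condExp_sub_ae_eq_of_ae_eq hY₀i hY₁i ?_ ?_).trans hMTEver
    · exact hswap ▸ hexcl Y₀ (by simp)
    · exact hswap ▸ hexcl Y₁ (by simp)
  have hlaw := map_restrict_eq_prod_of_condExp (ν := volume.restrict (Set.Ioc (0:ℝ) 1))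
    hZ.comap_le hU hXm (fun g hg hbdd => (hunif g hg hbdd).trans
      (ae_of_all _ fun ω => intervalIntegral.integral_of_le zero_le_one)) hA
  calc (∫ ω, (if Z ω ∈ G then Y₁ ω else Y₀ ω) ∂μ)
      = (∫ ω, Y₀ ω ∂μ) + ∫ ω in Z ⁻¹' G, (Y₁ ω - Y₀ ω) ∂μ :=
        integral_ite_eq_add_setIntegral_sub (hZ hG) hY₁i hY₀i
    _ = (∫ ω, Y₀ ω ∂μ) + ∫ ω in Z ⁻¹' G, MTE (U ω) (X ω) ∂μ :=
        congrArg _ (setIntegral_eq_of_condExp_ae_eq (hZ.prodMk hU).comap_le (hY₁i.sub hY₀i)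
          hMTE hA')
    _ = (∫ ω, Y₀ ω ∂μ) + ∫ ω in Z ⁻¹' G, (∫ u in Set.Ioc (0:ℝ) 1, MTE u (X ω)) ∂μ :=
        congrArg _ (setIntegral_comp_eq_setIntegral_integral hU hXm hlaw
          hMTEmeas.stronglyMeasurable (integrable_condExp.congr hMTE).integrableOn)
    _ = _ := by
        rw [← integral_indicator (hZ hG)]
        simp [Set.indicator_apply, intervalIntegral.integral_of_le]
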